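/- arXiv:1012.3643 — 2 statements merged into one kernel-verified Lean document; each statement's English description precedes it below -/
import Mathlib

section
/- Let $d(s) = \frac{1}{2} v_1(s)^2 + \frac{1}{2}(v_1(s)^4 + 4 v_2(s)^2)^{1/2}$. There do not exist $C^1$ functions $v_1, v_2: [0,\delta) \to \mathbb{R}$ with $v_1(0)=v_2(0)=0$, $v_1'(0) \neq 0$, and constants $C_1, C_2 > 0$ such that $|v_1(s)| \ge C_1 s$ and $|d(s)^{-1/2} v_1(s)| \le C_2 s$ for all small $s > 0$. -/
/-- The quantitative contradiction in Example (Not C¹): there is no pair of `C¹` functions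
`v₁, v₂` on `[0,δ)` with `v₁(0) = v₂(0) = 0`, `v₁'(0) ≠ 0`, and constants `C₁, C₂ > 0` such
that `|v₁(s)| ≥ C₁ s` and `d(s)^{-1/2}|v₁(s)| ≤ C₂ s` for all `s ∈ (0,δ)`, where
`d(s) = v₁(s)²/2 + √(v₁(s)⁴ + 4 v₂(s)²)/2`. -/
theorem stmt12 :
    ¬ ∃ (δ C₁ C₂ : ℝ) (v₁ v₂ : ℝ → ℝ),
      0 < δ ∧ 0 < C₁ ∧ 0 < C₂ ∧
      ContDiffOn ℝ 1 v₁ (Set.Ico 0 δ) ∧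
      ContDiffOn ℝ 1 v₂ (Set.Ico 0 δ) ∧
      v₁ 0 = 0 ∧ v₂ 0 = 0 ∧
      derivWithin v₁ (Set.Ici 0) 0 ≠ 0 ∧
      ∀ s ∈ Set.Ioo (0 : ℝ) δ,
        C₁ * s ≤ |v₁ s| ∧
        |v₁ s| / Real.sqrt ((v₁ s) ^ 2 / 2 + Real.sqrt ((v₁ s) ^ 4 + 4 * (v₂ s) ^ 2) / 2)
          ≤ C₂ * s := by
  rintro ⟨δ, C₁, C₂, v₁, v₂, hδ, hC₁, hC₂, hv₁, hv₂, h10, h20, -, hs⟩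
  set ε : ℝ := min 1 ((C₁ / C₂) ^ 2 / 4) with hεdef
  have hεpos : 0 < ε := lt_min one_pos (by positivity)
  have hε1 : ε ≤ 1 := min_le_left _ _
  have hε2 : ε ≤ (C₁ / C₂) ^ 2 / 4 := min_le_right _ _
  have hsub : Set.Ioo (0 : ℝ) δ ⊆ Set.Ico 0 δ := Set.Ioo_subset_Ico_self
  have hc1 : Filter.Tendsto v₁ (nhdsWithin 0 (Set.Ioo 0 δ)) (nhds 0) := by
    have := (hv₁.continuousOn 0 ⟨le_refl 0, hδ⟩)
    rw [ContinuousWithinAt, h10] at this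
    exact this.mono_left (nhdsWithin_mono _ hsub)
  have hc2 : Filter.Tendsto v₂ (nhdsWithin 0 (Set.Ioo 0 δ)) (nhds 0) := by
    have := (hv₂.continuousOn 0 ⟨le_refl 0, hδ⟩)
    rw [ContinuousWithinAt, h20] at this
    exact this.mono_left (nhdsWithin_mono _ hsub)
  have e1 : ∀ᶠ s in nhdsWithin 0 (Set.Ioo 0 δ), |v₁ s| < ε := by
    have := Metric.tendsto_nhds.mp hc1 ε hεpos
    simpa [Real.dist_eq] using this
  have e2 : ∀ᶠ s in nhdsWithin 0 (Set.Ioo 0 δ), |v₂ s| < ε := by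
    have := Metric.tendsto_nhds.mp hc2 ε hεpos
    simpa [Real.dist_eq] using this
  have e0 : ∀ᶠ s in nhdsWithin 0 (Set.Ioo 0 δ), s ∈ Set.Ioo (0 : ℝ) δ :=
    self_mem_nhdsWithin
  have : Filter.NeBot (nhdsWithin 0 (Set.Ioo (0:ℝ) δ)) := left_nhdsWithin_Ioo_neBot hδ
  obtain ⟨s, ha, hb, hmem⟩ := (e1.and (e2.and e0)).exists
  obtain ⟨hlow, hup⟩ := hs s hmem
  obtain ⟨hs0, hsδ⟩ := hmem
  set a := v₁ s
  set b := v₂ s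
  set d : ℝ := a ^ 2 / 2 + Real.sqrt (a ^ 4 + 4 * b ^ 2) / 2 with hd
  have ha0 : a ≠ 0 := by
    intro h
    rw [h] at hlow
    simp at hlow
    nlinarith
  have hsqrtle : Real.sqrt (a ^ 4 + 4 * b ^ 2) ≤ a ^ 2 + 2 * |b| := by
    have h1 : a ^ 4 + 4 * b ^ 2 ≤ (a ^ 2 + 2 * |b|) ^ 2 := by
      nlinarith [abs_nonneg b, sq_abs b]
    calc Real.sqrt (a ^ 4 + 4 * b ^ 2) ≤ Real.sqrt ((a ^ 2 + 2 * |b|) ^ 2) :=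
          Real.sqrt_le_sqrt h1
      _ = a ^ 2 + 2 * |b| := Real.sqrt_sq (by positivity)
  have hdpos : 0 < d := by
    have := Real.sqrt_nonneg (a ^ 4 + 4 * b ^ 2)
    have : 0 < a ^ 2 := by positivity
    rw [hd]; nlinarith [Real.sqrt_nonneg (a ^ 4 + 4 * b ^ 2)]
  have hdlt : d < (C₁ / C₂) ^ 2 := by
    have haa : a ^ 2 < ε := by
      have : a ^ 2 = |a| ^ 2 := (sq_abs a).symm
      nlinarith [abs_nonneg a]
    rw [hd]
    nlinarith
  have hsd : Real.sqrt d < C₁ / C₂ := by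
    calc Real.sqrt d < Real.sqrt ((C₁ / C₂) ^ 2) := Real.sqrt_lt_sqrt hdpos.le hdlt
      _ = C₁ / C₂ := Real.sqrt_sq (by positivity)
  have hsdpos : 0 < Real.sqrt d := Real.sqrt_pos.mpr hdpos
  have habs : |a| ≤ C₂ * s * Real.sqrt d := by
    rw [div_le_iff₀ hsdpos] at hup
    linarith
  have : C₂ * s * Real.sqrt d < C₂ * s * (C₁ / C₂) :=
    mul_lt_mul_of_pos_left hsd (by positivity)
  have heq : C₂ * s * (C₁ / C₂) = C₁ * s := by field_simp
  linarith
end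

section
/- Let $X$ be a smooth vector field on a Hilbert manifold $M$ and $f$ a Morse function such that $X = \nabla_{G_1} f$ near each critical point and $Xf > 0$ at each regular point, where $G_1$ is a Riemannian metric on $M$. Then there exists a Riemannian metric $G_2$ on $M$ agreeing with $G_1$ near each critical point such that the gradient of $f$ with respect to $G_2$ equals $X$. (The metric is $\langle u, v\rangle_{G_2} = \langle A(X, \nabla_{G_1} f) u, v \rangle_{G_1}$ where $A(V_1,V_2)$ is a smooth field of symmetric positive operators with $A(V_1,V_2)V_1 = V_2$, defined whenever $\langle V_1, V_2\rangle_{G_1} > 0$, and $A = \mathrm{Id}$ at critical points.) -/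
open scoped RealInnerProductSpace

section aux
variable {E : Type*} [NormedAddCommGroup E] [InnerProductSpace ℝ E] [CompleteSpace E]

noncomputable def Zgrad (f : E → ℝ) (x : E) : E :=
  (InnerProductSpace.toDual ℝ E).symm (fderiv ℝ f x)

lemma Zgrad_inner (f : E → ℝ) (x w : E) : ⟪Zgrad f x, w⟫ = fderiv ℝ f x w :=
  InnerProductSpace.toDual_symm_apply

noncomputable def Pop (f : E → ℝ) (X : E → E) (x : E) : E →L[ℝ] E :=
  ContinuousLinearMap.id ℝ E -
    (fderiv ℝ f x (X x))⁻¹ • (innerSL ℝ (Zgrad f x)).smulRight (X x)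

noncomputable def Paop (f : E → ℝ) (X : E → E) (x : E) : E →L[ℝ] E :=
  ContinuousLinearMap.id ℝ E -
    (fderiv ℝ f x (X x))⁻¹ • (innerSL ℝ (X x)).smulRight (Zgrad f x)

noncomputable def Phi (G₁ : E → E →L[ℝ] E) (f : E → ℝ) (X : E → E) (x : E) : E →L[ℝ] E :=
  (fderiv ℝ f x (X x))⁻¹ • (innerSL ℝ (Zgrad f x)).smulRight (Zgrad f x) +
    (Paop f X x).comp ((G₁ x).comp (Pop f X x))

lemma Pop_apply (f : E → ℝ) (X : E → E) (x u : E) :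
    Pop f X x u = u - (fderiv ℝ f x (X x))⁻¹ • (⟪Zgrad f x, u⟫ • X x) := rfl

lemma Paop_apply (f : E → ℝ) (X : E → E) (x w : E) :
    Paop f X x w = w - (fderiv ℝ f x (X x))⁻¹ • (⟪X x, w⟫ • Zgrad f x) := rfl

lemma Phi_apply (G₁ : E → E →L[ℝ] E) (f : E → ℝ) (X : E → E) (x u : E) :
    Phi G₁ f X x u = (fderiv ℝ f x (X x))⁻¹ • (⟪Zgrad f x, u⟫ • Zgrad f x) +
      Paop f X x (G₁ x (Pop f X x u)) := rfl

lemma Paop_inner (f : E → ℝ) (X : E → E) (x w v : E) :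
    ⟪Paop f X x w, v⟫ = ⟪w, Pop f X x v⟫ := by
  rw [Paop_apply, Pop_apply, inner_sub_left, inner_sub_right, real_inner_smul_left,
    real_inner_smul_right, real_inner_smul_left, real_inner_smul_right,
    real_inner_comm (X x) w]
  ring

lemma Phi_inner (G₁ : E → E →L[ℝ] E) (f : E → ℝ) (X : E → E) (x u v : E) :
    ⟪Phi G₁ f X x u, v⟫ = (fderiv ℝ f x (X x))⁻¹ * (⟪Zgrad f x, u⟫ * ⟪Zgrad f x, v⟫) +
      ⟪G₁ x (Pop f X x u), Pop f X x v⟫ := by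
  rw [Phi_apply, inner_add_left, real_inner_smul_left, real_inner_smul_left, Paop_inner]

lemma Pop_X (f : E → ℝ) (X : E → E) (x : E) (ht : fderiv ℝ f x (X x) ≠ 0) :
    Pop f X x (X x) = 0 := by
  rw [Pop_apply, Zgrad_inner, smul_smul, inv_mul_cancel₀ ht, one_smul, sub_self]

/-- On the set where `G₁ x (X x)` is the gradient, `Phi` agrees with `G₁`. -/
lemma Phi_eq_G₁ (G₁ : E → E →L[ℝ] E) (f : E → ℝ) (X : E → E) (x : E)
    (hsym : ∀ u v : E, ⟪G₁ x u, v⟫ = ⟪u, G₁ x v⟫)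
    (hgrad : ∀ w : E, ⟪G₁ x (X x), w⟫ = fderiv ℝ f x w)
    (ht : fderiv ℝ f x (X x) ≠ 0) :
    Phi G₁ f X x = G₁ x := by
  have hZ : G₁ x (X x) = Zgrad f x := by
    refine ext_inner_left ℝ fun v => ?_
    rw [real_inner_comm (G₁ x (X x)) v, real_inner_comm (Zgrad f x) v, hgrad, Zgrad_inner]
  ext u
  rw [Phi_apply]
  have hPu : G₁ x (Pop f X x u) =
      G₁ x u - ((fderiv ℝ f x (X x))⁻¹ * ⟪Zgrad f x, u⟫) • Zgrad f x := by
    rw [Pop_apply, smul_smul, map_sub, map_smul, hZ]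
  have hZX : ⟪Zgrad f x, X x⟫ = fderiv ℝ f x (X x) := Zgrad_inner f x (X x)
  have hXP : ⟪X x, G₁ x (Pop f X x u)⟫ = 0 := by
    rw [← hsym, hZ, Pop_apply, inner_sub_right, real_inner_smul_right, real_inner_smul_right,
      hZX]
    field_simp
    ring
  rw [Paop_apply, hXP, hPu, smul_smul]
  simp only [zero_smul, smul_zero, sub_zero]
  abel


lemma Phi_X (G₁ : E → E →L[ℝ] E) (f : E → ℝ) (X : E → E) (x : E)
    (ht : fderiv ℝ f x (X x) ≠ 0) (w : E) :
    ⟪Phi G₁ f X x (X x), w⟫ = fderiv ℝ f x w := by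
  rw [Phi_apply, Pop_X f X x ht, map_zero, map_zero, add_zero, Zgrad_inner, smul_smul,
    inv_mul_cancel₀ ht, one_smul, Zgrad_inner]

lemma Phi_symm (G₁ : E → E →L[ℝ] E) (f : E → ℝ) (X : E → E) (x : E)
    (hsym : ∀ u v : E, ⟪G₁ x u, v⟫ = ⟪u, G₁ x v⟫) (u v : E) :
    ⟪Phi G₁ f X x u, v⟫ = ⟪u, Phi G₁ f X x v⟫ := by
  rw [real_inner_comm (Phi G₁ f X x v) u, Phi_inner, Phi_inner, hsym,
    real_inner_comm (G₁ x (Pop f X x v)) (Pop f X x u)]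
  ring

lemma Phi_pos (G₁ : E → E →L[ℝ] E) (f : E → ℝ) (X : E → E) (x : E)
    (hpos : ∀ u : E, u ≠ 0 → 0 < ⟪G₁ x u, u⟫)
    (ht : 0 < fderiv ℝ f x (X x)) (u : E) (hu : u ≠ 0) :
    0 < ⟪Phi G₁ f X x u, u⟫ := by
  rw [Phi_inner]
  rcases eq_or_ne (Pop f X x u) 0 with hP | hP
  · have hZu : ⟪Zgrad f x, u⟫ ≠ 0 := by
      intro h0
      apply hu
      have := hP
      rw [Pop_apply, h0, zero_smul, smul_zero, sub_zero] at this
      exact this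
    rw [hP, map_zero, inner_zero_left, add_zero]
    exact mul_pos (inv_pos.mpr ht) (mul_self_pos.mpr hZu)
  · have h1 : 0 ≤ (fderiv ℝ f x (X x))⁻¹ * (⟪Zgrad f x, u⟫ * ⟪Zgrad f x, u⟫) :=
      mul_nonneg (inv_nonneg.mpr ht.le) (mul_self_nonneg _)
    have h2 : 0 < ⟪G₁ x (Pop f X x u), Pop f X x u⟫ := hpos _ hP
    linarith

lemma isBoundedLinearMap_innerSL :
    IsBoundedLinearMap ℝ (fun v : E => innerSL ℝ v) := by
  refine ⟨⟨fun u v => ?_, fun c v => ?_⟩, 1, one_pos, fun v => ?_⟩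
  · ext w; simp [inner_add_left]
  · ext w; simp [real_inner_smul_left]
  · rw [innerSL_apply_norm, one_mul]

lemma Phi_contDiffAt (G₁ : E → E →L[ℝ] E) (f : E → ℝ) (X : E → E) (y : E)
    (hG : ContDiffAt ℝ (⊤ : ℕ∞) G₁ y) (hX : ContDiffAt ℝ (⊤ : ℕ∞) X y)
    (hdf : ContDiffAt ℝ (⊤ : ℕ∞) (fderiv ℝ f) y) (ht : fderiv ℝ f y (X y) ≠ 0) :
    ContDiffAt ℝ (⊤ : ℕ∞) (Phi G₁ f X) y := by
  have hZ : ContDiffAt ℝ (⊤ : ℕ∞) (Zgrad f) y :=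
    ((InnerProductSpace.toDual ℝ E).symm.contDiff).comp_contDiffAt y hdf
  have ht' : ContDiffAt ℝ (⊤ : ℕ∞) (fun x => fderiv ℝ f x (X x)) y := hdf.clm_apply hX
  have htinv : ContDiffAt ℝ (⊤ : ℕ∞) (fun x => (fderiv ℝ f x (X x))⁻¹) y := ht'.inv ht
  have hiZ : ContDiffAt ℝ (⊤ : ℕ∞) (fun x => innerSL ℝ (Zgrad f x)) y :=
    (isBoundedLinearMap_innerSL.contDiff).comp_contDiffAt y hZ
  have hiX : ContDiffAt ℝ (⊤ : ℕ∞) (fun x => innerSL ℝ (X x)) y :=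
    (isBoundedLinearMap_innerSL.contDiff).comp_contDiffAt y hX
  have hid : ContDiffAt ℝ (⊤ : ℕ∞) (fun _ : E => ContinuousLinearMap.id ℝ E) y := contDiffAt_const
  have hPop : ContDiffAt ℝ (⊤ : ℕ∞) (Pop f X) y := hid.sub (htinv.smul (hiZ.smulRight hX))
  have hPaop : ContDiffAt ℝ (⊤ : ℕ∞) (Paop f X) y := hid.sub (htinv.smul (hiX.smulRight hZ))
  exact (htinv.smul (hiZ.smulRight hZ)).add (hPaop.clm_comp (hG.clm_comp hPop))

end aux

/-- A gradient-like vector field of a Morse function is the gradient for a suitable metric: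
if `X = ∇_{G₁} f` near each critical point and `Xf > 0` at regular points, there is a smooth
Riemannian metric `G₂` (given by a field of symmetric positive operators relative to the
ambient inner product) agreeing with `G₁` near each critical point with `∇_{G₂} f = X`. -/
theorem stmt19 {E : Type*} [NormedAddCommGroup E] [InnerProductSpace ℝ E] [CompleteSpace E]
    (U : Set E) (hU : IsOpen U)
    (f : E → ℝ) (hf : ContDiffOn ℝ (⊤ : ℕ∞) f U)
    (X : E → E) (hX : ContDiffOn ℝ (⊤ : ℕ∞) X U)
    (G₁ : E → E →L[ℝ] E) (hG₁smooth : ContDiffOn ℝ (⊤ : ℕ∞) G₁ U)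
    (hG₁sym : ∀ x ∈ U, ∀ u v : E, ⟪G₁ x u, v⟫ = ⟪u, G₁ x v⟫)
    (hG₁pos : ∀ x ∈ U, ∀ u : E, u ≠ 0 → 0 < ⟪G₁ x u, u⟫)
    (hMorse : ∀ p ∈ U, fderiv ℝ f p = 0 →
      ∃ φ : E ≃L[ℝ] (E →L[ℝ] ℝ), (φ : E →L[ℝ] E →L[ℝ] ℝ) = fderiv ℝ (fderiv ℝ f) p)
    (hnear : ∀ p ∈ U, fderiv ℝ f p = 0 →
      ∀ᶠ x in nhds p, ∀ w : E, ⟪G₁ x (X x), w⟫ = fderiv ℝ f x w)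
    (hreg : ∀ x ∈ U, fderiv ℝ f x ≠ 0 → 0 < fderiv ℝ f x (X x)) :
    ∃ G₂ : E → E →L[ℝ] E,
      ContDiffOn ℝ (⊤ : ℕ∞) G₂ U ∧
      (∀ x ∈ U, ∀ u v : E, ⟪G₂ x u, v⟫ = ⟪u, G₂ x v⟫) ∧
      (∀ x ∈ U, ∀ u : E, u ≠ 0 → 0 < ⟪G₂ x u, u⟫) ∧
      (∀ p ∈ U, fderiv ℝ f p = 0 → ∀ᶠ x in nhds p, G₂ x = G₁ x) ∧
      (∀ x ∈ U, ∀ w : E, ⟪G₂ x (X x), w⟫ = fderiv ℝ f x w) := by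
  classical
  set G₂ : E → E →L[ℝ] E :=
    fun x => if fderiv ℝ f x = 0 then G₁ x else Phi G₁ f X x with hG₂def
  have hdfC : ContDiffOn ℝ (⊤ : ℕ∞) (fderiv ℝ f) U := hf.fderiv_of_isOpen hU (by simp)
  -- wherever `G₁ x (X x)` represents the differential, `G₂ = G₁`
  have heq : ∀ x ∈ U, (∀ w : E, ⟪G₁ x (X x), w⟫ = fderiv ℝ f x w) → G₂ x = G₁ x := by
    intro x hx hg
    by_cases h0 : fderiv ℝ f x = 0
    · simp only [hG₂def, if_pos h0]
    · simp only [hG₂def, if_neg h0]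
      exact Phi_eq_G₁ G₁ f X x (hG₁sym x hx) hg (hreg x hx h0).ne'
  refine ⟨G₂, ?_, ?_, ?_, ?_, ?_⟩
  · -- smoothness
    apply contDiffOn_of_locally_contDiffOn
    intro x hx
    by_cases h0 : fderiv ℝ f x = 0
    · obtain ⟨s, hs, hs_open, hxs⟩ := eventually_nhds_iff.mp (hnear x hx h0)
      refine ⟨s, hs_open, hxs, ?_⟩
      exact (hG₁smooth.mono Set.inter_subset_left).congr
        fun y hy => heq y hy.1 (hs y hy.2)
    · refine ⟨U ∩ (fderiv ℝ f) ⁻¹' {(0 : E →L[ℝ] ℝ)}ᶜ,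
        hdfC.continuousOn.isOpen_inter_preimage hU isOpen_compl_singleton,
        ⟨hx, h0⟩, ?_⟩
      have hsub : U ∩ (U ∩ (fderiv ℝ f) ⁻¹' {(0 : E →L[ℝ] ℝ)}ᶜ) ⊆ U :=
        Set.inter_subset_left
      refine ContDiffOn.congr (f := Phi G₁ f X) ?_ ?_
      · intro y hy
        have hyU : y ∈ U := hy.1
        have hy0 : fderiv ℝ f y ≠ 0 := hy.2.2
        have hmem : U ∈ nhds y := hU.mem_nhds hyU
        exact (Phi_contDiffAt G₁ f X y (hG₁smooth.contDiffAt hmem) (hX.contDiffAt hmem)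
          (hdfC.contDiffAt hmem) (hreg y hyU hy0).ne').contDiffWithinAt
      · intro y hy
        simp only [hG₂def]
        exact if_neg (by simpa using hy.2.2)
  · -- symmetry
    intro x hx u v
    by_cases h0 : fderiv ℝ f x = 0
    · simp only [hG₂def, if_pos h0]; exact hG₁sym x hx u v
    · simp only [hG₂def, if_neg h0]; exact Phi_symm G₁ f X x (hG₁sym x hx) u v
  · -- positivity
    intro x hx u hu
    by_cases h0 : fderiv ℝ f x = 0
    · simp only [hG₂def, if_pos h0]; exact hG₁pos x hx u hu
    · simp only [hG₂def, if_neg h0]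
      exact Phi_pos G₁ f X x (hG₁pos x hx) (hreg x hx h0) u hu
  · -- agreement with G₁ near critical points
    intro p hp h0
    filter_upwards [hnear p hp h0, hU.eventually_mem hp] with x hg hxU
    exact heq x hxU hg
  · -- gradient condition
    intro x hx w
    by_cases h0 : fderiv ℝ f x = 0
    · simp only [hG₂def, if_pos h0]
      exact (hnear x hx h0).self_of_nhds w
    · simp only [hG₂def, if_neg h0]
      exact Phi_X G₁ f X x (hreg x hx h0).ne' w
end
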